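/- arXiv:2510.15698 — 3 statements merged into one kernel-verified Lean document; each statement's English description precedes it below -/
import Mathlib

section
/- Let T be a well-nested b-balanced rooted tree. Then there is exactly one bijection φ from the set of indices of reflect layers to the set of indices of split layers satisfying: φ(1) = i_max (the index of the last layer), i < φ(i) for all reflect-layer indices i, and for all reflect-layer indices i, j with i < j < φ(i) one has φ(j) < φ(i). -/
/-- The layer structure of a well-nested b-balanced rooted tree, abstracted to
the indices of its layers: layers are indexed 1,…,imax, `R` is the set of
indices of reflect layers and `S := {1,…,imax} \ R` the set of indices of
split layers.  `GoodBij R S imax φ` says φ is a bijection from reflect-layer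
indices to split-layer indices with φ(1) = imax, i < φ(i) for each reflect
index i, and φ(j) < φ(i) whenever i < j < φ(i) for reflect indices i, j. -/
def GoodBij (R S : Finset ℕ) (imax : ℕ) (φ : ℕ → ℕ) : Prop :=
  Set.BijOn φ ↑R ↑S ∧ φ 1 = imax ∧ (∀ i ∈ R, i < φ i) ∧
    ∀ i ∈ R, ∀ j ∈ R, i < j → j < φ i → φ j < φ i

/-- Well-nestedness of the layer structure: equally many reflect and split
layers, layer 1 is a reflect layer, layer imax is a split layer, and a
bijection as in `GoodBij` exists. -/
def WellNestedLayers (R S : Finset ℕ) (imax : ℕ) : Prop :=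
  1 ≤ imax ∧ R ⊆ Finset.Icc 1 imax ∧ S = Finset.Icc 1 imax \ R ∧
    R.card = S.card ∧ 1 ∈ R ∧ imax ∈ S ∧ ∃ φ : ℕ → ℕ, GoodBij R S imax φ

/-!
Read the reflect layers as opening and the split layers as closing brackets: a nested
bijection φ is then the bracket matching, and φ i is forced to be the first split index s > i
at which the reflect and split indices of [i, s] balance. At s = φ i they balance, because φ
maps the reflect indices of [i, φ i] onto its split indices. For any s strictly between i
and φ i, φ⁻¹ sends the split indices of [i, s] injectively to reflect indices of (i, s], so
the split indices are strictly fewer. Two nested bijections therefore cannot disagree at i.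
-/

open Finset

namespace GoodBij

variable {R S : Finset ℕ} {imax : ℕ} {φ : ℕ → ℕ} {i j s : ℕ}

theorem le_of_lt_apply_of_apply_le (h : GoodBij R S imax φ) (hi : i ∈ R) (hj : j ∈ R)
    (hij : i < φ j) (hji : φ j ≤ φ i) : i ≤ j := by
  by_contra! hlt
  have := h.2.2.2 j hj i hi hlt hij
  omega

theorem card_inter_Icc_apply_eq (h : GoodBij R S imax φ) (hRS : Disjoint R S) (hi : i ∈ R) :
    #(R ∩ Icc i (φ i)) = #(S ∩ Icc i (φ i)) := by
  have ⟨hbij, _, hlt, hnest⟩ := h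
  refine card_nbij φ ?_ (hbij.injOn.mono (by simp)) ?_
  · intro j hj
    simp only [coe_inter, coe_Icc, Set.mem_inter_iff, mem_coe, Set.mem_Icc] at hj ⊢
    obtain ⟨hjR, hij, hjφ⟩ := hj
    refine ⟨hbij.mapsTo hjR, ?_⟩
    rcases hij.eq_or_lt with rfl | hij
    · exact ⟨(hlt _ hjR).le, le_rfl⟩
    · have hjφ : j < φ i :=
        hjφ.lt_of_ne fun hj ↦ disjoint_left.mp hRS hjR (hj ▸ hbij.mapsTo hi)
      exact ⟨(hij.trans (hlt j hjR)).le, (hnest i hi j hjR hij hjφ).le⟩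
  · intro t ht
    simp only [coe_inter, coe_Icc, Set.mem_inter_iff, mem_coe, Set.mem_Icc] at ht
    obtain ⟨htS, hit, htφ⟩ := ht
    obtain ⟨j, hjR, rfl⟩ := hbij.surjOn htS
    have hit : i < φ j := hit.lt_of_ne fun he ↦ disjoint_left.mp hRS hi (he ▸ htS)
    have hij := h.le_of_lt_apply_of_apply_le hi hjR hit htφ
    have hjφ : j < φ j := hlt j hjR
    exact ⟨j, mem_coe.mpr (mem_inter.mpr ⟨hjR, mem_Icc.mpr ⟨hij, by omega⟩⟩), rfl⟩

theorem card_inter_Icc_lt (h : GoodBij R S imax φ) (hRS : Disjoint R S) (hi : i ∈ R)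
    (his : i < s) (hsφ : s < φ i) :
    #(S ∩ Icc i s) < #(R ∩ Icc i s) := by
  have ⟨hbij, _, hlt, _⟩ := h
  calc #(S ∩ Icc i s) ≤ #((R ∩ Icc i s).erase i) := card_le_card_of_surjOn φ ?_
    _ < #(R ∩ Icc i s) := card_erase_lt_of_mem (by simp [hi, his.le])
  intro t ht
  simp only [coe_inter, coe_Icc, Set.mem_inter_iff, mem_coe, Set.mem_Icc] at ht
  obtain ⟨htS, hit, hts⟩ := ht
  obtain ⟨j, hjR, rfl⟩ := hbij.surjOn htS
  have hit : i < φ j := hit.lt_of_ne fun he ↦ disjoint_left.mp hRS hi (he ▸ htS)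
  have hij := h.le_of_lt_apply_of_apply_le hi hjR hit (hts.trans hsφ.le)
  have hjφ : j < φ j := hlt j hjR
  have hji : j ≠ i := by rintro rfl; omega
  exact ⟨j, by simp [hji, hjR, hij, hjφ.le.trans hts], rfl⟩

theorem apply_eq {ψ : ℕ → ℕ} {imax' : ℕ} (hφ : GoodBij R S imax φ)
    (hψ : GoodBij R S imax' ψ) (hRS : Disjoint R S) (hi : i ∈ R) : φ i = ψ i := by
  wlog hlt : φ i < ψ i generalizing φ ψ imax imax'
  · rcases (not_lt.mp hlt).eq_or_lt with h | h
    · exact h.symm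
    · exact (this hψ hφ h).symm
  exact absurd (hφ.card_inter_Icc_apply_eq hRS hi)
    (hψ.card_inter_Icc_lt hRS hi (hφ.2.2.1 i hi) hlt).ne'

end GoodBij

/-- for a well-nested b-balanced rooted tree there is exactly one
bijection φ between reflect-layer indices and split-layer indices with the
properties of Definition "well-nested": any two such bijections agree on the
set of reflect-layer indices. -/
theorem stmt0 (R S : Finset ℕ) (imax : ℕ)
    (hwn : WellNestedLayers R S imax) :
    ∃ φ : ℕ → ℕ, GoodBij R S imax φ ∧
      ∀ ψ : ℕ → ℕ, GoodBij R S imax ψ → ∀ i ∈ R, φ i = ψ i := by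
  obtain ⟨-, -, rfl, -, -, -, φ, hφ⟩ := hwn
  exact ⟨φ, hφ, fun ψ hψ i hi ↦ hφ.apply_eq hψ disjoint_sdiff hi⟩
end

section
/- Define the power tower P_Δ(j, k) for positive integers j, k, Δ ≥ 3 by P_Δ(1, k) = k and P_Δ(j+1, k) = Δ^{P_Δ(j, k)}. Define a sequence a_2 = Δ^3 + 2Δ^2 + 2Δ + 3 and, assuming a_i ≥ 4 for all i, a_{i+1} ≤ 4·Δ^{a_i / 2} (with real exponent a_i/2). Then for every integer i ≥ 2, a_i ≤ P_Δ(i, Δ+1). -/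
/- By induction on i. The base case is the polynomial estimate Δ³ + 2Δ² + 2Δ + 3 ≤ Δ^(Δ+1).
For the step, with T = P_Δ(i, Δ+1) ≥ 4, monotonicity of the recursion gives
a_{i+1} ≤ 4·Δ^(T/2), and 4 ≤ Δ^2 ≤ Δ^(T/2) turns this into a_{i+1} ≤ Δ^(T/2)·Δ^(T/2) = Δ^T. -/

/-- `ptower Δ j k` is the power tower of height j with top exponent k and all
other entries Δ:  P_Δ(1,k) = k and P_Δ(j+1,k) = Δ^{P_Δ(j,k)}. -/
def ptower (Δ j k : ℕ) : ℕ := Nat.rec k (fun _ ih => Δ ^ ih) (j - 1)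

@[simp]
lemma ptower_one (Δ k : ℕ) : ptower Δ 1 k = k := rfl

lemma ptower_succ (Δ k : ℕ) {j : ℕ} (hj : 1 ≤ j) :
    ptower Δ (j + 1) k = Δ ^ ptower Δ j k := by
  obtain ⟨m, rfl⟩ := Nat.exists_eq_add_of_le' hj
  rfl

lemma le_ptower {Δ : ℕ} (hΔ : 2 ≤ Δ) (k : ℕ) {j : ℕ} (hj : 1 ≤ j) : k ≤ ptower Δ j k := by
  induction j, hj using Nat.le_induction with
  | base => rfl
  | succ n hn ih =>
    rw [ptower_succ Δ k hn]
    exact ih.trans (Nat.lt_pow_self hΔ).le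

lemma pow_three_add_two_mul_sq_add_two_mul_add_three_le_pow_succ {Δ : ℕ} (hΔ : 3 ≤ Δ) :
    Δ ^ 3 + 2 * Δ ^ 2 + 2 * Δ + 3 ≤ Δ ^ (Δ + 1) :=
  calc Δ ^ 3 + 2 * Δ ^ 2 + 2 * Δ + 3 ≤ 2 * Δ ^ 3 := by nlinarith
    _ ≤ Δ ^ 4 := by nlinarith [pow_pos (show 0 < Δ by omega) 3]
    _ ≤ Δ ^ (Δ + 1) := Nat.pow_le_pow_right (by omega) (by omega)

lemma four_mul_rpow_half_le_rpow {b x : ℝ} (hb : 2 ≤ b) (hx : 4 ≤ x) :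
    4 * b ^ (x / 2) ≤ b ^ x := by
  have hb1 : 1 ≤ b := by linarith
  have h4 : 4 ≤ b ^ (x / 2) :=
    calc (4 : ℝ) ≤ b ^ (2 : ℝ) := by rw [Real.rpow_two]; nlinarith
      _ ≤ b ^ (x / 2) := Real.rpow_le_rpow_of_exponent_le hb1 (by linarith)
  calc 4 * b ^ (x / 2) ≤ b ^ (x / 2) * b ^ (x / 2) := by gcongr
    _ = b ^ x := by rw [← Real.rpow_add (by linarith), add_halves]

theorem stmt7_general (Δ : ℕ) (hΔ : 3 ≤ Δ) (a : ℕ → ℝ)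
    (ha2 : a 2 = (Δ : ℝ) ^ 3 + 2 * (Δ : ℝ) ^ 2 + 2 * (Δ : ℝ) + 3)
    (hrec : ∀ i, 2 ≤ i → a (i + 1) ≤ 4 * (Δ : ℝ) ^ (a i / 2)) :
    ∀ i, 2 ≤ i → a i ≤ (ptower Δ i (Δ + 1) : ℝ) := by
  have hΔ' : (3 : ℝ) ≤ Δ := by exact_mod_cast hΔ
  intro i hi
  induction i, hi using Nat.le_induction with
  | base =>
    rw [ha2, ptower_succ Δ _ le_rfl, ptower_one]
    exact_mod_cast pow_three_add_two_mul_sq_add_two_mul_add_three_le_pow_succ hΔ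
  | succ n hn ih =>
    set T := ptower Δ n (Δ + 1)
    have hT : (4 : ℝ) ≤ T := by exact_mod_cast (le_ptower (by omega) (Δ + 1) (by omega)).trans' (by omega)
    rw [ptower_succ Δ _ (by omega), Nat.cast_pow, ← Real.rpow_natCast]
    calc a (n + 1) ≤ 4 * (Δ : ℝ) ^ (a n / 2) := hrec n hn
      _ ≤ 4 * (Δ : ℝ) ^ ((T : ℝ) / 2) := by gcongr; linarith
      _ ≤ (Δ : ℝ) ^ (T : ℝ) := four_mul_rpow_half_le_rpow (by linarith) hT

/-- if a₂ = Δ³ + 2Δ² + 2Δ + 3, aᵢ ≥ 4 for all i ≥ 2, and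
a_{i+1} ≤ 4·Δ^{aᵢ/2} (real exponent), then aᵢ ≤ P_Δ(i, Δ+1) for all i ≥ 2. -/
theorem stmt7 (Δ : ℕ) (hΔ : 3 ≤ Δ) (a : ℕ → ℝ)
    (ha2 : a 2 = (Δ : ℝ) ^ 3 + 2 * (Δ : ℝ) ^ 2 + 2 * (Δ : ℝ) + 3)
    (ha4 : ∀ i, 2 ≤ i → 4 ≤ a i)
    (hrec : ∀ i, 2 ≤ i → a (i + 1) ≤ 4 * (Δ : ℝ) ^ (a i / 2)) :
    ∀ i, 2 ≤ i → a i ≤ (ptower Δ i (Δ + 1) : ℝ) :=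
  stmt7_general Δ hΔ a ha2 hrec
end

section
/- Let T be a well-nested b-balanced rooted tree equipped with its unique matching bijection φ between reflect-layer indices and split-layer indices. Then for every reflect-layer index i, φ(i) equals the minimal index j > i such that the layers L_i, L_{i+1}, …, L_j contain equally many reflect layers and split layers. -/
/-! Read each `i ∈ R` as an opening bracket and `φ i ∈ S` as its closing bracket: the
intervals `[i, φ i]` are then nested or disjoint, so inside `[i, φ i]` every bracket is
matched, while on a shorter interval `[i, j]` the bracket opened at `i` is still unmatched. -/

open Finset

structure IsNestedMatching (R S : Finset ℕ) (φ : ℕ → ℕ) : Prop where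
  bijOn : Set.BijOn φ R S
  disjoint : Disjoint R S
  lt_apply : ∀ i ∈ R, i < φ i
  nested : ∀ i ∈ R, ∀ j ∈ R, i < j → j < φ i → φ j < φ i

theorem GoodBij.isNestedMatching {R S : Finset ℕ} {imax : ℕ} {φ : ℕ → ℕ}
    (hφ : GoodBij R S imax φ) (hRS : Disjoint R S) : IsNestedMatching R S φ :=
  ⟨hφ.1, hRS, hφ.2.2.1, hφ.2.2.2⟩

theorem WellNestedLayers.disjoint {R S : Finset ℕ} {imax : ℕ}
    (hwn : WellNestedLayers R S imax) : Disjoint R S :=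
  hwn.2.2.1 ▸ disjoint_sdiff

namespace IsNestedMatching

variable {R S : Finset ℕ} {φ : ℕ → ℕ}

theorem apply_ne_of_mem (hφ : IsNestedMatching R S φ) {i k : ℕ} (hi : i ∈ R) (hk : k ∈ R) :
    φ k ≠ i :=
  fun h => disjoint_left.1 hφ.disjoint hi (h ▸ hφ.bijOn.mapsTo hk)

theorem apply_le_of_mem_Icc (hφ : IsNestedMatching R S φ) {i a : ℕ} (hi : i ∈ R) (ha : a ∈ R)
    (hia : a ∈ Icc i (φ i)) : φ a ≤ φ i := by
  obtain ⟨hia, haφ⟩ := mem_Icc.1 hia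
  rcases hia.eq_or_lt with rfl | hia
  · exact le_rfl
  · exact (hφ.nested i hi a ha hia (haφ.lt_of_ne (hφ.apply_ne_of_mem ha hi).symm)).le

theorem le_of_apply_mem_Icc (hφ : IsNestedMatching R S φ) {i k : ℕ} (hi : i ∈ R) (hk : k ∈ R)
    (hki : φ k ∈ Icc i (φ i)) : i ≤ k := by
  obtain ⟨hik, hki⟩ := mem_Icc.1 hki
  by_contra! h
  have := hφ.nested k hk i hi h (hik.lt_of_ne (hφ.apply_ne_of_mem hi hk).symm)
  omega

theorem inter_Icc_subset_image (hφ : IsNestedMatching R S φ) {i j : ℕ} (hi : i ∈ R)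
    (hj : j ≤ φ i) : S ∩ Icc i j ⊆ (R ∩ Icc i j).image φ := by
  intro s hs
  obtain ⟨hsS, hsij⟩ := mem_inter.1 hs
  obtain ⟨k, hk, rfl⟩ := hφ.bijOn.surjOn (mem_coe.2 hsS)
  have hk : k ∈ R := mem_coe.1 hk
  have hik : i ≤ k :=
    hφ.le_of_apply_mem_Icc hi hk (mem_Icc.2 ⟨(mem_Icc.1 hsij).1, (mem_Icc.1 hsij).2.trans hj⟩)
  exact mem_image_of_mem φ <| mem_inter.2
    ⟨hk, mem_Icc.2 ⟨hik, (hφ.lt_apply k hk).le.trans (mem_Icc.1 hsij).2⟩⟩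

theorem image_inter_Icc_apply (hφ : IsNestedMatching R S φ) {i : ℕ} (hi : i ∈ R) :
    (R ∩ Icc i (φ i)).image φ = S ∩ Icc i (φ i) := by
  refine subset_antisymm (fun s hs => ?_) (hφ.inter_Icc_subset_image hi le_rfl)
  obtain ⟨a, ha, rfl⟩ := mem_image.1 hs
  obtain ⟨haR, hai⟩ := mem_inter.1 ha
  exact mem_inter.2 ⟨hφ.bijOn.mapsTo haR,
    mem_Icc.2 ⟨(mem_Icc.1 hai).1.trans (hφ.lt_apply a haR).le, hφ.apply_le_of_mem_Icc hi haR hai⟩⟩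

theorem card_inter_Icc_apply (hφ : IsNestedMatching R S φ) {i : ℕ} (hi : i ∈ R) :
    #(R ∩ Icc i (φ i)) = #(S ∩ Icc i (φ i)) := by
  rw [← hφ.image_inter_Icc_apply hi,
    card_image_of_injOn (hφ.bijOn.injOn.mono (by simp [Set.inter_subset_left]))]

theorem card_inter_Icc_lt (hφ : IsNestedMatching R S φ) {i j : ℕ} (hi : i ∈ R) (hij : i ≤ j)
    (hj : j < φ i) : #(S ∩ Icc i j) < #(R ∩ Icc i j) := by
  have hmem : i ∈ R ∩ Icc i j := mem_inter.2 ⟨hi, mem_Icc.2 ⟨le_rfl, hij⟩⟩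
  have hsub : S ∩ Icc i j ⊆ ((R ∩ Icc i j).erase i).image φ := by
    intro s hs
    obtain ⟨k, hk, rfl⟩ := mem_image.1 (hφ.inter_Icc_subset_image hi hj.le hs)
    refine mem_image_of_mem φ (mem_erase.2 ⟨?_, hk⟩)
    rintro rfl
    exact absurd (mem_Icc.1 (mem_inter.1 hs).2).2 hj.not_ge
  calc #(S ∩ Icc i j) ≤ #((R ∩ Icc i j).erase i) := (card_le_card hsub).trans card_image_le
    _ < #(R ∩ Icc i j) := card_erase_lt_of_mem hmem

end IsNestedMatching

/-- for every matching bijection φ (which is unique) of a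
well-nested b-balanced rooted tree and every reflect-layer index i, φ(i) is
the least index j > i such that the layers Lᵢ,…,Lⱼ contain equally many
reflect layers and split layers. -/
theorem stmt14 (R S : Finset ℕ) (imax : ℕ)
    (hwn : WellNestedLayers R S imax)
    (φ : ℕ → ℕ) (hφ : GoodBij R S imax φ) :
    ∀ i ∈ R, IsLeast {j : ℕ | i < j ∧
      (R ∩ Finset.Icc i j).card = (S ∩ Finset.Icc i j).card} (φ i) := by
  have hφ := hφ.isNestedMatching hwn.disjoint
  intro i hi
  refine ⟨⟨hφ.lt_apply i hi, hφ.card_inter_Icc_apply hi⟩, fun j ⟨hij, hcard⟩ => ?_⟩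
  by_contra! hj
  exact (hφ.card_inter_Icc_lt hi hij.le hj).ne' hcard
end
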